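/- In a finite distributive lattice, for any pair of elements u ≤ v, the largest congruence 1 is the join of the three pairwise disjoint congruences Θ(0,u), Θ(u,v), Θ(v,1), and Θ(0,u) ∨ Θ(v,1) and Θ(u,v) are complements of each other in the congruence lattice. -/

import Mathlib

/-- A lattice congruence on `L`: an equivalence relation compatible with `⊔` and `⊓`. -/
structure LatticeCongruence (L : Type*) [Lattice L] where
  r : L → L → Prop
  refl : ∀ x, r x x
  symm : ∀ {x y}, r x y → r y x
  trans : ∀ {x y z}, r x y → r y z → r x z
  sup : ∀ {a b c d}, r a b → r c d → r (a ⊔ c) (b ⊔ d)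
  inf : ∀ {a b c d}, r a b → r c d → r (a ⊓ c) (b ⊓ d)

namespace LatticeCongruence
variable {L : Type*} [Lattice L]

instance : PartialOrder (LatticeCongruence L) where
  le θ φ := ∀ x y, θ.r x y → φ.r x y
  le_refl θ := fun _ _ h => h
  le_trans θ φ ψ h1 h2 := fun x y h => h2 x y (h1 x y h)
  le_antisymm θ φ h1 h2 := by
    cases θ; cases φ
    simp only [LatticeCongruence.mk.injEq]
    funext x y
    exact propext ⟨h1 x y, h2 x y⟩

instance : InfSet (LatticeCongruence L) where
  sInf S :=
  { r := fun x y => ∀ θ ∈ S, θ.r x y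
    refl := fun x θ _ => θ.refl x
    symm := fun h θ hθ => θ.symm (h θ hθ)
    trans := fun h1 h2 θ hθ => θ.trans (h1 θ hθ) (h2 θ hθ)
    sup := fun h1 h2 θ hθ => θ.sup (h1 θ hθ) (h2 θ hθ)
    inf := fun h1 h2 θ hθ => θ.inf (h1 θ hθ) (h2 θ hθ) }

instance : CompleteLattice (LatticeCongruence L) :=
  completeLatticeOfInf _ (fun _ =>
    ⟨fun θ hθ _ _ h => h θ hθ, fun _ hφ _ _ h θ hθ => hφ hθ _ _ h⟩)

end LatticeCongruence

/-- `theta a b` is the principal congruence generated by the pair `(a, b)`. -/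
def theta {L : Type*} [Lattice L] (a b : L) : LatticeCongruence L :=
  sInf {θ : LatticeCongruence L | θ.r a b}

/-- `thetaPlus a b = Θ⁺(a,b) = Θ(a ⊓ b, a)`, the least congruence collapsing `a` below `b`. -/
def thetaPlus {L : Type*} [Lattice L] (a b : L) : LatticeCongruence L :=
  theta (a ⊓ b) a

/-!
Each of `Θ(0,u)`, `Θ(u,v)`, `Θ(v,1)` is described explicitly: for `a ≤ b` in a distributive
lattice, `x ≡ y (mod Θ(a,b))` iff `x ⊓ a = y ⊓ a` and `x ⊔ b = y ⊔ b`, i.e. `Θ(a,b)` is the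
intersection of the kernels of the homomorphisms `(· ⊓ a)` and `(· ⊔ b)`. Disjointness then
follows from cancellativity (`x ⊓ c = y ⊓ c` and `x ⊔ c = y ⊔ c` force `x = y`), using that both
`Θ(0,u)` and `Θ(v,1)` lie in the kernel of `x ↦ (x ⊔ u) ⊓ v`. The join is `Θ(0,1) = 1` because
principal congruences of a chain `a ≤ b ≤ c` satisfy `Θ(a,b) ⊔ Θ(b,c) = Θ(a,c)`.
-/

namespace LatticeCongruence

variable {L : Type*} [Lattice L]

lemma r_of_le {θ φ : LatticeCongruence L} (h : θ ≤ φ) {x y : L} (hxy : θ.r x y) : φ.r x y :=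
  h x y hxy

lemma inf_r_iff {θ φ : LatticeCongruence L} {x y : L} :
    (θ ⊓ φ).r x y ↔ θ.r x y ∧ φ.r x y :=
  ⟨fun h => ⟨r_of_le inf_le_left h, r_of_le inf_le_right h⟩,
    fun h ψ hψ => by rcases hψ with rfl | rfl; exacts [h.1, h.2]⟩

lemma eq_bot_of_r_imp_eq {θ : LatticeCongruence L} (h : ∀ x y, θ.r x y → x = y) : θ = ⊥ :=
  le_bot_iff.1 fun x y hxy => h x y hxy ▸ fun ψ _ => ψ.refl x

def ker {M : Type*} [Lattice M] (f : LatticeHom L M) : LatticeCongruence L where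
  r x y := f x = f y
  refl _ := rfl
  symm h := h.symm
  trans h₁ h₂ := h₁.trans h₂
  sup h₁ h₂ := by rw [map_sup, map_sup, h₁, h₂]
  inf h₁ h₂ := by rw [map_inf, map_inf, h₁, h₂]

end LatticeCongruence

open LatticeCongruence

section Lattice

variable {L : Type*} [Lattice L]

lemma theta_r_self (a b : L) : (theta a b).r a b :=
  fun _ hθ => hθ

lemma theta_le_iff {a b : L} {θ : LatticeCongruence L} : theta a b ≤ θ ↔ θ.r a b :=
  ⟨fun h => r_of_le h (theta_r_self a b), fun h => sInf_le h⟩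

lemma theta_sup_theta {a b c : L} (hab : a ≤ b) (hbc : b ≤ c) :
    theta a b ⊔ theta b c = theta a c := by
  set θ := theta a c
  have hac : θ.r a c := theta_r_self a c
  refine le_antisymm (sup_le (theta_le_iff.2 ?_) (theta_le_iff.2 ?_)) (theta_le_iff.2 ?_)
  · simpa [inf_eq_left.2 hab, inf_eq_right.2 hbc] using θ.inf hac (θ.refl b)
  · simpa [sup_eq_right.2 hab, sup_eq_left.2 hbc] using θ.sup hac (θ.refl b)
  · exact (theta a b ⊔ theta b c).trans (r_of_le le_sup_left (theta_r_self a b))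
      (r_of_le le_sup_right (theta_r_self b c))

lemma theta_bot_top [BoundedOrder L] : theta (⊥ : L) ⊤ = ⊤ := by
  set θ := theta (⊥ : L) ⊤
  have h_top : ∀ z, θ.r z ⊤ := fun z => by
    simpa using θ.sup (θ.refl z) (theta_r_self ⊥ ⊤)
  exact top_le_iff.1 fun x y _ => θ.trans (h_top x) (θ.symm (h_top y))

end Lattice

section DistribLattice

variable {L : Type*} [DistribLattice L]

def LatticeHom.infRight (a : L) : LatticeHom L L where
  toFun x := x ⊓ a
  map_sup' x y := inf_sup_right x y a
  map_inf' x y := inf_inf_distrib_right x y a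

def LatticeHom.supRight (a : L) : LatticeHom L L where
  toFun x := x ⊔ a
  map_sup' x y := sup_sup_distrib_right x y a
  map_inf' x y := sup_inf_right x y a

lemma theta_eq_ker_inf_ker {a b : L} (hab : a ≤ b) :
    theta a b = ker (LatticeHom.infRight a) ⊓ ker (LatticeHom.supRight b) := by
  refine le_antisymm (theta_le_iff.2 (inf_r_iff.2 ⟨?_, ?_⟩)) fun x y hxy θ hθ => ?_
  · show a ⊓ a = b ⊓ a
    rw [inf_idem, inf_eq_right.2 hab]
  · show a ⊔ b = b ⊔ b
    rw [sup_idem, sup_eq_right.2 hab]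
  obtain ⟨hinf, hsup⟩ : x ⊓ a = y ⊓ a ∧ x ⊔ b = y ⊔ b := inf_r_iff.1 hxy
  -- `x = x ⊔ y ⊓ a ≡ x ⊔ y ⊓ b = y ⊔ x ⊓ b ≡ y ⊔ x ⊓ a = y`
  have hx : θ.r x (x ⊔ y ⊓ b) := by
    simpa [← hinf] using θ.sup (θ.refl x) (θ.inf (θ.refl y) hθ)
  have hy : θ.r y (y ⊔ x ⊓ b) := by
    simpa [hinf] using θ.sup (θ.refl y) (θ.inf (θ.refl x) hθ)
  have hxy' : x ⊔ y ⊓ b = y ⊔ x ⊓ b := by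
    rw [sup_inf_left, sup_inf_left, hsup, sup_comm x y]
  exact θ.trans hx (hxy' ▸ θ.symm hy)

lemma theta_r_iff {a b : L} (hab : a ≤ b) {x y : L} :
    (theta a b).r x y ↔ x ⊓ a = y ⊓ a ∧ x ⊔ b = y ⊔ b := by
  rw [theta_eq_ker_inf_ker hab, inf_r_iff]
  rfl

lemma theta_inf_theta_eq_bot {a b c d : L} (hab : a ≤ b) (hbc : b ≤ c) (hcd : c ≤ d) :
    theta a b ⊓ theta c d = ⊥ := by
  refine eq_bot_of_r_imp_eq fun x y hxy => ?_
  obtain ⟨-, hsup⟩ := (theta_r_iff hab).1 (r_of_le inf_le_left hxy)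
  obtain ⟨hinf, -⟩ := (theta_r_iff hcd).1 (r_of_le inf_le_right hxy)
  refine eq_of_inf_eq_sup_eq (a := b) ?_ hsup
  rw [← inf_eq_right.2 hbc, ← inf_assoc, ← inf_assoc, hinf]

lemma theta_bot_sup_theta_top_le_ker [BoundedOrder L] {u v : L} (huv : u ≤ v) :
    theta ⊥ u ⊔ theta v ⊤ ≤ ker ((LatticeHom.infRight v).comp (LatticeHom.supRight u)) := by
  refine sup_le (theta_le_iff.2 ?_) (theta_le_iff.2 ?_)
  · show (⊥ ⊔ u) ⊓ v = (u ⊔ u) ⊓ v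
    rw [bot_sup_eq, sup_idem]
  · show (v ⊔ u) ⊓ v = (⊤ ⊔ u) ⊓ v
    rw [sup_eq_left.2 huv, inf_idem, top_sup_eq, top_inf_eq]

lemma disjoint_theta_bot_sup_theta_top_theta [BoundedOrder L] {u v : L} (huv : u ≤ v) :
    Disjoint (theta ⊥ u ⊔ theta v ⊤) (theta u v) := by
  refine disjoint_iff.2 (eq_bot_of_r_imp_eq fun x y hxy => ?_)
  have hproj : (x ⊔ u) ⊓ v = (y ⊔ u) ⊓ v :=
    r_of_le (theta_bot_sup_theta_top_le_ker huv) (r_of_le inf_le_left hxy)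
  obtain ⟨hinf, hsup⟩ := (theta_r_iff huv).1 (r_of_le inf_le_right hxy)
  have hsup' : (x ⊔ u) ⊔ v = (y ⊔ u) ⊔ v := by
    rw [sup_right_comm, hsup, sup_right_comm]
  exact eq_of_inf_eq_sup_eq hinf (eq_of_inf_eq_sup_eq hproj hsup')

end DistribLattice

theorem finite_distrib_three_interval_decomposition_general {D : Type*} [DistribLattice D]
    [BoundedOrder D] {u v : D} (huv : u ≤ v) :
    theta (⊥ : D) u ⊔ theta u v ⊔ theta v ⊤ = (⊤ : LatticeCongruence D) ∧
    theta (⊥ : D) u ⊓ theta u v = ⊥ ∧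
    theta u v ⊓ theta v (⊤ : D) = ⊥ ∧
    theta (⊥ : D) u ⊓ theta v ⊤ = ⊥ ∧
    IsCompl (theta (⊥ : D) u ⊔ theta v ⊤) (theta u v) := by
  have hjoin : theta (⊥ : D) u ⊔ theta u v ⊔ theta v ⊤ = ⊤ := by
    rw [theta_sup_theta bot_le huv, theta_sup_theta bot_le le_top, theta_bot_top]
  refine ⟨hjoin, theta_inf_theta_eq_bot bot_le le_rfl huv,
    theta_inf_theta_eq_bot huv le_rfl le_top, theta_inf_theta_eq_bot bot_le huv le_top,
    disjoint_theta_bot_sup_theta_top_theta huv, codisjoint_iff.2 ?_⟩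
  rwa [sup_right_comm]

/-- In a finite bounded distributive lattice, for `u ≤ v` the largest congruence is the
join of the three pairwise disjoint congruences `Θ(⊥,u)`, `Θ(u,v)`, `Θ(v,⊤)`, and
`Θ(⊥,u) ⊔ Θ(v,⊤)` and `Θ(u,v)` are complements of each other in the congruence lattice. -/
theorem finite_distrib_three_interval_decomposition {D : Type*} [DistribLattice D]
    [BoundedOrder D] [Finite D] {u v : D} (huv : u ≤ v) :
    theta (⊥ : D) u ⊔ theta u v ⊔ theta v ⊤ = (⊤ : LatticeCongruence D) ∧
    theta (⊥ : D) u ⊓ theta u v = ⊥ ∧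
    theta u v ⊓ theta v (⊤ : D) = ⊥ ∧
    theta (⊥ : D) u ⊓ theta v ⊤ = ⊥ ∧
    IsCompl (theta (⊥ : D) u ⊔ theta v ⊤) (theta u v) :=
  finite_distrib_three_interval_decomposition_general huv
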